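/- Let G be a graph, B, C ⊆ V(G) with C ⊆ B, and let uv be an edge of G with {u,v} ⊆ C. Then γ_g(G_{uv}|B) ≤ γ_g(G|C) and γ_g′(G_{uv}|B) ≤ γ_g′(G|C). -/

import Mathlib

/-!
Dominator plays on `G_{uv}|B` while imagining a game on `G|C`: Staller's moves are copied into
the imagined game, and Dominator's optimal moves there are copied back (replaced by an arbitrary
legal move when they would dominate nothing new in `G_{uv}`). Because `u` and `v` are dominated
from the start and `u'`, `v'` are declared dominated, deleting `uv` and adding `uv'`, `vu'` only
changes neighbourhoods at dominated vertices. Hence every vertex undominated in the real game is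
the copy of one undominated in the imagined game, every real move is legal in the imagined game,
and the real game ends no later.
-/

open Finset

namespace DomGame

open scoped Classical

noncomputable section

variable {V : Type*}

/-- The closed neighborhood of `x` in `G`, as a `Finset`. -/
def closedNbr (G : SimpleGraph V) [Fintype V] (x : V) : Finset V :=
  Finset.univ.filter (fun y => y = x ∨ G.Adj x y)

lemma card_compl_lt (G : SimpleGraph V) [Fintype V] {S : Finset V} {x : V}
    (h : ¬ closedNbr G x ⊆ S) :
    (Finset.univ \ (S ∪ closedNbr G x)).card < (Finset.univ \ S).card := by
  obtain ⟨v, hvN, hvS⟩ := Finset.not_subset.mp h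
  apply Finset.card_lt_card
  have hsub : Finset.univ \ (S ∪ closedNbr G x) ⊆ Finset.univ \ S := by
    intro y hy
    simp only [Finset.mem_sdiff, Finset.mem_univ, Finset.mem_union, true_and, not_or] at hy ⊢
    exact hy.1
  exact (Finset.ssubset_iff_of_subset hsub).mpr ⟨v, by simp [hvS], by simp [hvN]⟩

/-- The value of the (partially dominated) domination game on `G|S`, with
`dom = true` meaning Dominator moves next, `dom = false` meaning Staller moves next.
A legal move is a vertex whose closed neighborhood contains a yet undominated vertex;
Dominator minimizes, Staller maximizes the total number of moves. -/
def gameVal (G : SimpleGraph V) [Fintype V] (dom : Bool) (S : Finset V) : ℕ :=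
  let moves := Finset.univ.filter (fun x => ¬ closedNbr G x ⊆ S)
  if h : moves.Nonempty then
    if dom then
      moves.attach.inf' (by simpa using h)
        (fun x => 1 + gameVal G false (S ∪ closedNbr G x.1))
    else
      moves.attach.sup' (by simpa using h)
        (fun x => 1 + gameVal G true (S ∪ closedNbr G x.1))
  else 0
termination_by (Finset.univ \ S).card
decreasing_by
  · exact card_compl_lt G (by simpa using (Finset.mem_filter.mp x.2).2)
  · exact card_compl_lt G (by simpa using (Finset.mem_filter.mp x.2).2)

/-- The D-game domination number `γ_g(G)`. -/
def gammaD (G : SimpleGraph V) [Fintype V] : ℕ := gameVal G true ∅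

/-- The S-game domination number `γ_g'(G)`. -/
def gammaS (G : SimpleGraph V) [Fintype V] : ℕ := gameVal G false ∅

/-- Value of the Staller-pass domination game on `G|S`: Staller may skip
(at most) one move during the game; the skipped turn is not counted.
`dom` tells whose turn it is, `canPass` whether Staller's pass is still available. -/
def spVal (G : SimpleGraph V) [Fintype V] (dom : Bool) (canPass : Bool) (S : Finset V) : ℕ :=
  let moves := Finset.univ.filter (fun x => ¬ closedNbr G x ⊆ S)
  if h : moves.Nonempty then
    if dom then
      moves.attach.inf' (by simpa using h)
        (fun x => 1 + spVal G false canPass (S ∪ closedNbr G x.1))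
    else
      if hc : canPass then
        max (moves.attach.sup' (by simpa using h)
              (fun x => 1 + spVal G true canPass (S ∪ closedNbr G x.1)))
            (spVal G true false S)
      else
        moves.attach.sup' (by simpa using h)
          (fun x => 1 + spVal G true canPass (S ∪ closedNbr G x.1))
  else 0
termination_by ((Finset.univ \ S).card, if canPass then 1 else 0)
decreasing_by
  · exact Prod.Lex.left _ _ (card_compl_lt G (by simpa using (Finset.mem_filter.mp x.2).2))
  · exact Prod.Lex.left _ _ (card_compl_lt G (by simpa using (Finset.mem_filter.mp x.2).2))
  · simp only [hc, if_true]
    exact Prod.Lex.right _ (by norm_num)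
  · exact Prod.Lex.left _ _ (card_compl_lt G (by simpa using (Finset.mem_filter.mp x.2).2))

/-- Value of the Dominator-pass domination game on `G|S`: Dominator may skip
(at most) one move during the game; the skipped turn is not counted. -/
def dpVal (G : SimpleGraph V) [Fintype V] (dom : Bool) (canPass : Bool) (S : Finset V) : ℕ :=
  let moves := Finset.univ.filter (fun x => ¬ closedNbr G x ⊆ S)
  if h : moves.Nonempty then
    if dom then
      if hc : canPass then
        min (moves.attach.inf' (by simpa using h)
              (fun x => 1 + dpVal G false canPass (S ∪ closedNbr G x.1)))
            (dpVal G false false S)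
      else
        moves.attach.inf' (by simpa using h)
          (fun x => 1 + dpVal G false canPass (S ∪ closedNbr G x.1))
    else
      moves.attach.sup' (by simpa using h)
        (fun x => 1 + dpVal G true canPass (S ∪ closedNbr G x.1))
  else 0
termination_by ((Finset.univ \ S).card, if canPass then 1 else 0)
decreasing_by
  · exact Prod.Lex.left _ _ (card_compl_lt G (by simpa using (Finset.mem_filter.mp x.2).2))
  · simp only [hc, if_true]
    exact Prod.Lex.right _ (by norm_num)
  · exact Prod.Lex.left _ _ (card_compl_lt G (by simpa using (Finset.mem_filter.mp x.2).2))
  · exact Prod.Lex.left _ _ (card_compl_lt G (by simpa using (Finset.mem_filter.mp x.2).2))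

/-- The graph `G_{uv}`: obtained from `G - uv` by adding two new vertices
`u' = Sum.inr false` and `v' = Sum.inr true` together with the edges `u v'` and `v u'`. -/
def cutGraph (G : SimpleGraph V) (u v : V) : SimpleGraph (V ⊕ Bool) :=
  SimpleGraph.fromRel (fun x y =>
    match x, y with
    | Sum.inl a, Sum.inl b => G.Adj a b ∧ ¬ (a = u ∧ b = v) ∧ ¬ (a = v ∧ b = u)
    | Sum.inl a, Sum.inr b => (b = false ∧ a = v) ∨ (b = true ∧ a = u)
    | _, _ => False)

/-- The set of vertices of `G_{uv}` declared dominated, given that `B ⊆ V(G)` is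
declared dominated: `B` together with the two new vertices `u'` and `v'`. -/
def cutDom [DecidableEq V] (B : Finset V) : Finset (V ⊕ Bool) :=
  B.image Sum.inl ∪ {Sum.inr false, Sum.inr true}

/-- Disjoint union of two simple graphs. -/
def disjUnion {α β : Type*} (G : SimpleGraph α) (H : SimpleGraph β) :
    SimpleGraph (α ⊕ β) :=
  SimpleGraph.fromRel (fun x y =>
    match x, y with
    | Sum.inl a, Sum.inl b => G.Adj a b
    | Sum.inr a, Sum.inr b => H.Adj a b
    | _, _ => False)

/-- The disjoint union of `k` paths, the `i`-th on `size i` vertices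
(consecutive vertices of each `Fin (size i)` being adjacent). -/
def sigmaPathGraph (k : ℕ) (size : Fin k → ℕ) :
    SimpleGraph (Σ i : Fin k, Fin (size i)) :=
  SimpleGraph.fromRel (fun x y => x.1 = y.1 ∧ x.2.val + 1 = y.2.val)

/-- Vertex set of the three-legged spider `T_{p,q,r}`:
the center together with three legs on `4p`, `4q` and `4r` vertices. -/
abbrev SpiderV (p q r : ℕ) := Unit ⊕ (Fin (4*p) ⊕ (Fin (4*q) ⊕ Fin (4*r)))

/-- The three-legged spider `T_{p,q,r}`, obtained from paths `P_{4p+1}`, `P_{4q+1}`,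
`P_{4r+1}` by identifying one end-vertex of each into the center. In each leg,
vertex `0` is adjacent to the center, and vertices `i`, `i+1` are adjacent. -/
def spider (p q r : ℕ) : SimpleGraph (SpiderV p q r) :=
  SimpleGraph.fromRel (fun x y =>
    match x, y with
    | Sum.inl _, Sum.inr (Sum.inl i) => i.val = 0
    | Sum.inl _, Sum.inr (Sum.inr (Sum.inl i)) => i.val = 0
    | Sum.inl _, Sum.inr (Sum.inr (Sum.inr i)) => i.val = 0
    | Sum.inr (Sum.inl i), Sum.inr (Sum.inl j) => i.val + 1 = j.val
    | Sum.inr (Sum.inr (Sum.inl i)), Sum.inr (Sum.inr (Sum.inl j)) => i.val + 1 = j.val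
    | Sum.inr (Sum.inr (Sum.inr i)), Sum.inr (Sum.inr (Sum.inr j)) => i.val + 1 = j.val
    | _, _ => False)

/-- The weight `w(P'_{4q+r}) = w(P''_{4q+r}) = 2q + c_r` with
`c_0 = 0`, `c_1 = 1`, `c_2 = 3/2`, `c_3 = 7/4`, as a function of `n = 4q + r`. -/
def pathWeight (n : ℕ) : ℚ :=
  2 * (n / 4 : ℕ) +
    (if n % 4 = 0 then 0 else if n % 4 = 1 then 1 else if n % 4 = 2 then 3/2 else 7/4)

section GameValue

variable [Fintype V] {G : SimpleGraph V} {S : Finset V} {x : V}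

@[simp] lemma mem_closedNbr {y : V} : y ∈ closedNbr G x ↔ y = x ∨ G.Adj x y := by
  simp [closedNbr]

lemma gameVal_eq_zero (h : ∀ x, closedNbr G x ⊆ S) (b : Bool) : gameVal G b S = 0 := by
  rw [gameVal.eq_def, dif_neg]
  simpa [Finset.filter_eq_empty_iff] using h

lemma gameVal_true_le (hx : ¬ closedNbr G x ⊆ S) :
    gameVal G true S ≤ 1 + gameVal G false (S ∪ closedNbr G x) := by
  have hmem : x ∈ univ.filter (fun x => ¬ closedNbr G x ⊆ S) := by simpa using hx
  rw [gameVal.eq_def (S := S), dif_pos ⟨x, hmem⟩, if_pos rfl]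
  exact Finset.inf'_le _ (Finset.mem_attach _ ⟨x, hmem⟩)

lemma le_gameVal_false (hx : ¬ closedNbr G x ⊆ S) :
    1 + gameVal G true (S ∪ closedNbr G x) ≤ gameVal G false S := by
  have hmem : x ∈ univ.filter (fun x => ¬ closedNbr G x ⊆ S) := by simpa using hx
  rw [gameVal.eq_def (S := S), dif_pos ⟨x, hmem⟩, if_neg Bool.false_ne_true]
  exact Finset.le_sup' (fun x => 1 + gameVal G true (S ∪ closedNbr G x.1))
    (Finset.mem_attach _ ⟨x, hmem⟩)

lemma exists_gameVal_true_eq (h : ∃ x, ¬ closedNbr G x ⊆ S) :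
    ∃ x, ¬ closedNbr G x ⊆ S ∧
      gameVal G true S = 1 + gameVal G false (S ∪ closedNbr G x) := by
  have hne : (univ.filter (fun x => ¬ closedNbr G x ⊆ S)).Nonempty :=
    h.imp fun x hx => by simpa using hx
  rw [gameVal.eq_def (S := S), dif_pos hne, if_pos rfl]
  obtain ⟨y, -, hy⟩ := Finset.exists_mem_eq_inf' hne.attach
    fun x : univ.filter (fun x => ¬ closedNbr G x ⊆ S) =>
      1 + gameVal G false (S ∪ closedNbr G x)
  exact ⟨y, (mem_filter.mp y.2).2, hy⟩

lemma gameVal_false_le {K : ℕ} (h : ∃ x, ¬ closedNbr G x ⊆ S)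
    (hK : ∀ x, ¬ closedNbr G x ⊆ S → 1 + gameVal G true (S ∪ closedNbr G x) ≤ K) :
    gameVal G false S ≤ K := by
  have hne : (univ.filter (fun x => ¬ closedNbr G x ⊆ S)).Nonempty :=
    h.imp fun x hx => by simpa using hx
  rw [gameVal.eq_def (S := S), dif_pos hne, if_neg Bool.false_ne_true]
  exact Finset.sup'_le _ _ fun y _ => hK y ((mem_filter.mp y.2).2)

theorem gameVal_le_of_simulation {W : Type*} [Fintype W] {H : SimpleGraph W}
    (R : Finset W → Finset V → Prop)
    (staller : ∀ T S m, R T S → ¬ closedNbr H m ⊆ T →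
      ∃ x, ¬ closedNbr G x ⊆ S ∧ R (T ∪ closedNbr H m) (S ∪ closedNbr G x))
    (dominator : ∀ T S m x, R T S → ¬ closedNbr H m ⊆ T → ¬ closedNbr G x ⊆ S →
      ∃ m', ¬ closedNbr H m' ⊆ T ∧ R (T ∪ closedNbr H m') (S ∪ closedNbr G x))
    {T : Finset W} (hR : R T S) (b : Bool) : gameVal H b T ≤ gameVal G b S := by
  induction hn : (univ \ S).card using Nat.strong_induction_on generalizing T S b with
  | _ n ih =>
  subst hn
  by_cases hH : ∃ m, ¬ closedNbr H m ⊆ T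
  swap
  · push Not at hH
    simp [gameVal_eq_zero hH]
  have ih' {T' x} (hx : ¬ closedNbr G x ⊆ S) (hR' : R T' (S ∪ closedNbr G x)) (b' : Bool) :
      gameVal H b' T' ≤ gameVal G b' (S ∪ closedNbr G x) :=
    ih _ (card_compl_lt G hx) hR' b' rfl
  cases b
  · refine gameVal_false_le hH fun m hm => ?_
    obtain ⟨x, hx, hR'⟩ := staller T S m hR hm
    calc 1 + gameVal H true (T ∪ closedNbr H m)
        ≤ 1 + gameVal G true (S ∪ closedNbr G x) := by grw [ih' hx hR']
      _ ≤ gameVal G false S := le_gameVal_false hx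
  · obtain ⟨m, hm⟩ := hH
    obtain ⟨x, hx, hval⟩ := exists_gameVal_true_eq ((staller T S m hR hm).imp fun _ => And.left)
    obtain ⟨m', hm', hR'⟩ := dominator T S m x hR hm hx
    calc gameVal H true T ≤ 1 + gameVal H false (T ∪ closedNbr H m') := gameVal_true_le hm'
      _ ≤ 1 + gameVal G false (S ∪ closedNbr G x) := by grw [ih' hx hR']
      _ = gameVal G true S := hval.symm

end GameValue

section CutGraph

variable {G : SimpleGraph V} {u v : V}

@[simp] lemma cutGraph_adj_inl_inl {a b : V} :
    (cutGraph G u v).Adj (Sum.inl a) (Sum.inl b) ↔ G.Adj a b ∧ s(a, b) ≠ s(u, v) := by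
  rw [cutGraph, SimpleGraph.fromRel_adj]
  constructor
  · rintro ⟨-, ⟨h, h1, h2⟩ | ⟨h, h1, h2⟩⟩
    · simp_all
    · exact ⟨h.symm, by rw [ne_eq, Sym2.eq_iff]; tauto⟩
  · rintro ⟨h, h'⟩
    simp_all [h.ne]

@[simp] lemma cutGraph_adj_inl_inr {a : V} {b : Bool} :
    (cutGraph G u v).Adj (Sum.inl a) (Sum.inr b) ↔ a = if b then u else v := by
  cases b <;> simp [cutGraph, SimpleGraph.fromRel_adj]

@[simp] lemma cutGraph_adj_inr_inl {a : V} {b : Bool} :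
    (cutGraph G u v).Adj (Sum.inr b) (Sum.inl a) ↔ a = if b then u else v :=
  (cutGraph G u v).adj_comm _ _ |>.trans cutGraph_adj_inl_inr

@[simp] lemma cutGraph_not_adj_inr_inr {a b : Bool} :
    ¬ (cutGraph G u v).Adj (Sum.inr a) (Sum.inr b) := by
  simp [cutGraph, SimpleGraph.fromRel_adj]

/-- The invariant of Dominator's strategy on `G_{uv}`, who imagines playing on `G` from `S`. -/
def CutCovers (u v : V) (T : Finset (V ⊕ Bool)) (S : Finset V) : Prop :=
  u ∈ S ∧ v ∈ S ∧ (∀ a ∈ S, Sum.inl a ∈ T) ∧ ∀ b, Sum.inr b ∈ T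

-- `gameVal` forms unions with classical decidable equality; `Sum`'s own instance would not match.
attribute [local instance high] Classical.propDecidable

variable [Fintype V] {S : Finset V} {T T' : Finset (V ⊕ Bool)}

lemma CutCovers.union_closedNbr (h : CutCovers u v T S) {x : V} (hT : T ⊆ T')
    (hx : closedNbr (cutGraph G u v) (Sum.inl x) ⊆ T') :
    CutCovers u v T' (S ∪ closedNbr G x) := by
  obtain ⟨hu, hv, hS, hB⟩ := h
  refine ⟨mem_union_left _ hu, mem_union_left _ hv, fun a ha => ?_, fun b => hT (hB b)⟩
  rcases mem_union.mp ha with ha | ha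
  · exact hT (hS a ha)
  by_cases hxa : s(x, a) = s(u, v)
  · rcases Sym2.eq_iff.mp hxa with ⟨-, rfl⟩ | ⟨-, rfl⟩
    · exact hT (hS _ hv)
    · exact hT (hS _ hu)
  · exact hx (by simp_all)

lemma CutCovers.exists_eq_inl (h : CutCovers u v T S) {m : V ⊕ Bool}
    (hm : ¬ closedNbr (cutGraph G u v) m ⊆ T) :
    ∃ x, m = Sum.inl x ∧ ¬ closedNbr G x ⊆ S := by
  obtain ⟨hu, hv, hS, hB⟩ := h
  obtain ⟨z, hz, hzT⟩ := not_subset.mp hm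
  rcases m with x | b
  · refine ⟨x, rfl, fun hxS => hzT ?_⟩
    rcases z with a | c
    · have ha : a ∈ closedNbr G x := mem_closedNbr.mpr <|
        (mem_closedNbr.mp hz).imp (fun h => Sum.inl_injective h)
          fun h => (cutGraph_adj_inl_inl.mp h).1
      exact hS a (hxS ha)
    · exact hB c
  · exfalso
    rcases z with a | c
    · cases b <;> simp_all
    · exact hzT (hB c)

theorem gameVal_cutGraph_le (h : CutCovers u v T S) (b : Bool) :
    gameVal (cutGraph G u v) b T ≤ gameVal G b S := by
  refine gameVal_le_of_simulation (CutCovers u v) ?_ ?_ h b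
  · intro T S m hR hm
    obtain ⟨x, rfl, hx⟩ := hR.exists_eq_inl hm
    exact ⟨x, hx, hR.union_closedNbr subset_union_left subset_union_right⟩
  · intro T S m x hR hm hx
    by_cases hxT : closedNbr (cutGraph G u v) (Sum.inl x) ⊆ T
    · exact ⟨m, hm, hR.union_closedNbr subset_union_left (hxT.trans subset_union_left)⟩
    · exact ⟨Sum.inl x, hxT, hR.union_closedNbr subset_union_left subset_union_right⟩

end CutGraph

theorem cutting_lemma_II_general {V : Type*} [Fintype V] [DecidableEq V] (G : SimpleGraph V)
    (u v : V) (B C : Finset V) (hCB : C ⊆ B)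
    (hu : u ∈ C) (hv : v ∈ C) :
    gameVal (cutGraph G u v) true (cutDom B) ≤ gameVal G true C ∧
    gameVal (cutGraph G u v) false (cutDom B) ≤ gameVal G false C := by
  have h : CutCovers u v (cutDom B) C :=
    ⟨hu, hv, fun a ha => by simp [cutDom, hCB ha], fun b => by cases b <;> simp [cutDom]⟩
  exact ⟨gameVal_cutGraph_le h true, gameVal_cutGraph_le h false⟩

/-- If `C ⊆ B` and `{u,v} ⊆ C` for an edge `uv` of `G`, then
`γ_g(G_{uv}|B) ≤ γ_g(G|C)` and `γ_g′(G_{uv}|B) ≤ γ_g′(G|C)`. -/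
theorem cutting_lemma_II {V : Type*} [Fintype V] [DecidableEq V] (G : SimpleGraph V)
    (u v : V) (huv : G.Adj u v) (B C : Finset V) (hCB : C ⊆ B)
    (hu : u ∈ C) (hv : v ∈ C) :
    gameVal (cutGraph G u v) true (cutDom B) ≤ gameVal G true C ∧
    gameVal (cutGraph G u v) false (cutDom B) ≤ gameVal G false C :=
  cutting_lemma_II_general G u v B C hCB hu hv

end

end DomGame
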